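/- Let G be a graph of order n ≥ 7 all of whose connected components are isolated vertices, edges, or paths on three vertices, and let U ⊆ V(G) be such that the switching G^U also has all components among isolated vertices, edges, and paths on three vertices. Then U = ∅ or U = V(G). -/

import Mathlib

open Matrix
open scoped Classical

/-- The Seidel matrix `S(G) = J - I - 2A(G)` of a simple graph. -/
noncomputable def seidel {V : Type*} [Fintype V] [DecidableEq V] (G : SimpleGraph V) :
    Matrix V V ℝ :=
  Matrix.of fun i j => if i = j then 0 else if G.Adj i j then -1 else 1

/-- The switching of `G` with respect to a vertex set `U`: adjacency between `U` and its
complement is toggled. -/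
def SimpleGraph.switch {V : Type*} (G : SimpleGraph V) (U : Set V) : SimpleGraph V where
  Adj i j := i ≠ j ∧ (G.Adj i j ↔ ((i ∈ U) ↔ (j ∈ U)))
  symm := by
    constructor
    intro i j h
    beta_reduce at h ⊢
    refine ⟨h.1.symm, ?_⟩
    rw [SimpleGraph.adj_comm]
    tauto
  loopless := by constructor; intro i h; exact h.1 rfl

/-- `G` and `H` are switching equivalent: `H` is isomorphic to some switching of `G`. -/
def SwitchingEquiv {V W : Type*} (G : SimpleGraph V) (H : SimpleGraph W) : Prop :=
  ∃ U : Set V, Nonempty (H ≃g G.switch U)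

/-- Every connected component of `G` is an isolated vertex, a single edge,
or a path on three vertices (a cherry). -/
def IsCherryForest {V : Type*} (G : SimpleGraph V) : Prop :=
  ∀ c : G.ConnectedComponent,
    Nonempty (G.induce c.supp ≃g SimpleGraph.pathGraph 1) ∨
    Nonempty (G.induce c.supp ≃g SimpleGraph.pathGraph 2) ∨
    Nonempty (G.induce c.supp ≃g SimpleGraph.pathGraph 3)

section Aux

open SimpleGraph

private lemma path_L1 {k : ℕ} {v a b c : Fin k} (ha : (pathGraph k).Adj v a)
    (hb : (pathGraph k).Adj v b) (hc : (pathGraph k).Adj v c) :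
    a = b ∨ a = c ∨ b = c := by
  rw [SimpleGraph.pathGraph_adj] at ha hb hc
  simp only [← Fin.val_inj]
  omega

private lemma path_small {k : ℕ} (hk : k ≤ 2) {v a b : Fin k}
    (ha : (pathGraph k).Adj v a) (hb : (pathGraph k).Adj v b) : a = b := by
  rw [SimpleGraph.pathGraph_adj] at ha hb
  have h1 := v.is_lt; have h2 := a.is_lt; have h3 := b.is_lt
  simp only [← Fin.val_inj]
  omega

private lemma path_L2 {v a b w w' : Fin 3}
    (ha : (pathGraph 3).Adj v a) (hb : (pathGraph 3).Adj v b) (hab : a ≠ b)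
    (hw : (pathGraph 3).Adj v w) (hww' : (pathGraph 3).Adj w w') : w' = v := by
  rw [SimpleGraph.pathGraph_adj] at ha hb hw hww'
  have hab' : (a : ℕ) ≠ (b : ℕ) := fun h => hab (Fin.val_inj.mp h)
  rw [← Fin.val_inj]
  have h1 := v.is_lt; have h2 := a.is_lt; have h3 := b.is_lt
  have h4 := w.is_lt; have h5 := w'.is_lt
  omega

variable {V : Type*} [Fintype V] {G : SimpleGraph V}

private lemma mem_supp_of_adj {v w : V} (h : G.Adj v w) :
    w ∈ (G.connectedComponentMk v).supp := by
  rw [SimpleGraph.ConnectedComponent.mem_supp_iff]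
  exact SimpleGraph.ConnectedComponent.sound h.symm.reachable

private lemma cherry_L1 (hG : IsCherryForest G)
    {v a b c : V} (ha : G.Adj v a) (hb : G.Adj v b) (hc : G.Adj v c) :
    a = b ∨ a = c ∨ b = c := by
  set C := G.connectedComponentMk v with hC
  have hv : v ∈ C.supp := by rw [SimpleGraph.ConnectedComponent.mem_supp_iff]
  have ha' := mem_supp_of_adj ha
  have hb' := mem_supp_of_adj hb
  have hc' := mem_supp_of_adj hc
  have key : ∀ (k : ℕ) (e : G.induce C.supp ≃g pathGraph k), a = b ∨ a = c ∨ b = c := by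
    intro k e
    have hA : (G.induce C.supp).Adj ⟨v, hv⟩ ⟨a, ha'⟩ := by simpa using ha
    have hB : (G.induce C.supp).Adj ⟨v, hv⟩ ⟨b, hb'⟩ := by simpa using hb
    have hCC : (G.induce C.supp).Adj ⟨v, hv⟩ ⟨c, hc'⟩ := by simpa using hc
    have := path_L1 (e.map_adj_iff.mpr hA) (e.map_adj_iff.mpr hB) (e.map_adj_iff.mpr hCC)
    rcases this with h | h | h
    · exact Or.inl (congrArg Subtype.val (e.injective h))
    · exact Or.inr (Or.inl (congrArg Subtype.val (e.injective h)))
    · exact Or.inr (Or.inr (congrArg Subtype.val (e.injective h)))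
  rcases hG C with h | h | h <;> obtain ⟨e⟩ := h
  exacts [key 1 e, key 2 e, key 3 e]

private lemma cherry_L2 (hG : IsCherryForest G)
    {v a b w w' : V} (ha : G.Adj v a) (hb : G.Adj v b) (hab : a ≠ b)
    (hw : G.Adj v w) (hww' : G.Adj w w') : w' = v := by
  set C := G.connectedComponentMk v with hC
  have hv : v ∈ C.supp := by rw [SimpleGraph.ConnectedComponent.mem_supp_iff]
  have ha' := mem_supp_of_adj ha
  have hb' := mem_supp_of_adj hb
  have hw' := mem_supp_of_adj hw
  have hw'' : w' ∈ C.supp := by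
    rw [SimpleGraph.ConnectedComponent.mem_supp_iff]
    exact (SimpleGraph.ConnectedComponent.sound hww'.symm.reachable).trans
      (SimpleGraph.ConnectedComponent.sound hw.symm.reachable)
  have hA : (G.induce C.supp).Adj ⟨v, hv⟩ ⟨a, ha'⟩ := by simpa using ha
  have hB : (G.induce C.supp).Adj ⟨v, hv⟩ ⟨b, hb'⟩ := by simpa using hb
  have hW : (G.induce C.supp).Adj ⟨v, hv⟩ ⟨w, hw'⟩ := by simpa using hw
  have hWW : (G.induce C.supp).Adj ⟨w, hw'⟩ ⟨w', hw''⟩ := by simpa using hww'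
  have hab' : (⟨a, ha'⟩ : C.supp) ≠ ⟨b, hb'⟩ := by
    intro h; exact hab (congrArg Subtype.val h)
  have small : ∀ (k : ℕ), k ≤ 2 → (G.induce C.supp ≃g pathGraph k) → False := by
    intro k hk e
    exact hab' (e.injective (path_small hk (e.map_adj_iff.mpr hA) (e.map_adj_iff.mpr hB)))
  rcases hG C with h | h | h <;> obtain ⟨e⟩ := h
  · exact (small 1 (by norm_num) e).elim
  · exact (small 2 le_rfl e).elim
  · have hne : e ⟨a, ha'⟩ ≠ e ⟨b, hb'⟩ := fun h => hab' (e.injective h)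
    have := path_L2 (e.map_adj_iff.mpr hA) (e.map_adj_iff.mpr hB) hne
      (e.map_adj_iff.mpr hW) (e.map_adj_iff.mpr hWW)
    exact congrArg Subtype.val (e.injective this)

private lemma cherry_deg (hG : IsCherryForest G) (v : V) :
    (G.neighborFinset v).card ≤ 2 := by
  by_contra h
  push_neg at h
  obtain ⟨s, hs, hcard⟩ := Finset.exists_subset_card_eq (n := 3) h
  obtain ⟨a, b, c, hab, hac, hbc, rfl⟩ := Finset.card_eq_three.mp hcard
  have ha := (SimpleGraph.mem_neighborFinset ..).mp (hs (show a ∈ ({a,b,c} : Finset V) by simp))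
  have hb := (SimpleGraph.mem_neighborFinset ..).mp (hs (show b ∈ ({a,b,c} : Finset V) by simp))
  have hc := (SimpleGraph.mem_neighborFinset ..).mp (hs (show c ∈ ({a,b,c} : Finset V) by simp))
  rcases cherry_L1 hG ha hb hc with h | h | h
  exacts [hab h, hac h, hbc h]

private lemma switch_adj_mem {U : Set V} {u w : V} (hu : u ∈ U) :
    (G.switch U).Adj u w ↔ ((w ∈ U ∧ G.Adj u w) ∨ (w ∉ U ∧ ¬ G.Adj u w)) := by
  constructor
  · rintro ⟨hne, hiff⟩
    by_cases hw : w ∈ U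
    · exact Or.inl ⟨hw, hiff.mpr (by tauto)⟩
    · refine Or.inr ⟨hw, fun hadj => hw ((hiff.mp hadj).mp hu)⟩
  · rintro (⟨hw, hadj⟩ | ⟨hw, hnadj⟩)
    · exact ⟨hadj.ne, by tauto⟩
    · exact ⟨fun h => hw (h ▸ hu), by tauto⟩

private lemma key_lemma {n : ℕ} (hn : 7 ≤ n) (G : SimpleGraph (Fin n))
    (U : Set (Fin n)) (hG : IsCherryForest G) (hGU : IsCherryForest (G.switch U))
    (hU : U.Nonempty) : (Uᶜ).ncard ≤ 3 := by
  classical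
  rw [Set.ncard_eq_toFinset_card']
  set CF := (Uᶜ).toFinset with hCFdef
  set UF := U.toFinset with hUFdef
  have hsplitcard : UF.card + CF.card = n := by
    have : CF = UFᶜ := by rw [hCFdef, hUFdef, Set.toFinset_compl]
    rw [this, Finset.card_compl, Fintype.card_fin]
    have : UF.card ≤ n := by
      have := Finset.card_le_card (Finset.subset_univ UF)
      simpa using this
    omega
  -- main per-vertex facts
  have main : ∀ u ∈ U, CF.card ≤ 4 ∧
      (4 ≤ CF.card → (G.neighborFinset u).card = 2 ∧ G.neighborFinset u ⊆ CF) := by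
    intro u hu
    set N := G.neighborFinset u with hNdef
    have hsub1 : CF ⊆ (CF \ N) ∪ (N ∩ CF) := by
      intro x hx
      by_cases hxN : x ∈ N
      · exact Finset.mem_union_right _ (Finset.mem_inter.mpr ⟨hxN, hx⟩)
      · exact Finset.mem_union_left _ (Finset.mem_sdiff.mpr ⟨hx, hxN⟩)
    have h1 : CF.card ≤ (CF \ N).card + (N ∩ CF).card :=
      le_trans (Finset.card_le_card hsub1) (Finset.card_union_le _ _)
    have hsub2 : (CF \ N) ∪ (N ∩ UF) ⊆ (G.switch U).neighborFinset u := by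
      intro x hx
      rw [SimpleGraph.mem_neighborFinset, switch_adj_mem hu]
      rcases Finset.mem_union.mp hx with hx | hx
      · rw [Finset.mem_sdiff, hCFdef, Set.mem_toFinset] at hx
        exact Or.inr ⟨hx.1, fun h => hx.2 ((SimpleGraph.mem_neighborFinset ..).mpr h)⟩
      · rw [Finset.mem_inter, hUFdef, Set.mem_toFinset] at hx
        exact Or.inl ⟨hx.2, (SimpleGraph.mem_neighborFinset ..).mp hx.1⟩
    have hdisj : Disjoint (CF \ N) (N ∩ UF) := by
      rw [Finset.disjoint_left]
      intro x hx hx'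
      rw [Finset.mem_sdiff] at hx
      exact hx.2 (Finset.mem_inter.mp hx').1
    have h2 : (CF \ N).card + (N ∩ UF).card ≤ 2 := by
      rw [← Finset.card_union_of_disjoint hdisj]
      exact le_trans (Finset.card_le_card hsub2) (cherry_deg hGU u)
    have hNsplit : (N ∩ UF).card + (N ∩ CF).card = N.card := by
      rw [← Finset.card_union_of_disjoint]
      · congr 1
        ext x
        simp only [Finset.mem_union, Finset.mem_inter, hUFdef, hCFdef, Set.mem_toFinset,
          Set.mem_compl_iff]
        by_cases hxU : x ∈ U <;> tauto
      · rw [Finset.disjoint_left]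
        intro x hx hx'
        rw [Finset.mem_inter, hUFdef, Set.mem_toFinset] at hx
        rw [Finset.mem_inter, hCFdef, Set.mem_toFinset] at hx'
        exact hx'.2 hx.2
    have hN2 : N.card ≤ 2 := cherry_deg hG u
    constructor
    · omega
    · intro h4
      have ha0 : (N ∩ UF).card = 0 ∧ (N ∩ CF).card = 2 := by omega
      refine ⟨by omega, ?_⟩
      intro x hx
      by_cases hxU : x ∈ U
      · exfalso
        have : x ∈ N ∩ UF := Finset.mem_inter.mpr ⟨hx, by rw [hUFdef, Set.mem_toFinset]; exact hxU⟩
        rw [Finset.card_eq_zero] at ha0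
        simpa [ha0.1] using this
      · rw [hCFdef, Set.mem_toFinset]; exact hxU
  by_contra hc
  push_neg at hc
  have h4 : 4 ≤ CF.card := hc
  obtain ⟨u0, hu0⟩ := hU
  have hCF4 : CF.card = 4 := le_antisymm (main u0 hu0).1 h4
  have hUF3 : 3 ≤ UF.card := by omega
  obtain ⟨s, hs, hcard⟩ := Finset.exists_subset_card_eq (n := 3) hUF3
  obtain ⟨u1, u2, u3, h12, h13, h23, rfl⟩ := Finset.card_eq_three.mp hcard
  have hu1 : u1 ∈ U := by have := hs (by simp : u1 ∈ ({u1,u2,u3} : Finset _)); rwa [hUFdef, Set.mem_toFinset] at this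
  have hu2 : u2 ∈ U := by have := hs (by simp : u2 ∈ ({u1,u2,u3} : Finset _)); rwa [hUFdef, Set.mem_toFinset] at this
  have hu3 : u3 ∈ U := by have := hs (by simp : u3 ∈ ({u1,u2,u3} : Finset _)); rwa [hUFdef, Set.mem_toFinset] at this
  have hfacts := fun (u : Fin n) (hu : u ∈ U) => (main u hu).2 h4
  -- pairwise disjoint neighborhoods
  have hdisjN : ∀ x y : Fin n, x ∈ U → y ∈ U → x ≠ y →
      Disjoint (G.neighborFinset x) (G.neighborFinset y) := by
    intro x y hx hy hxy
    rw [Finset.disjoint_left]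
    intro z hzx hzy
    obtain ⟨p, q, hpq, hNx⟩ := Finset.card_eq_two.mp (hfacts x hx).1
    have hp : G.Adj x p := (SimpleGraph.mem_neighborFinset ..).mp (hNx ▸ (by simp : p ∈ ({p,q} : Finset _)))
    have hq : G.Adj x q := (SimpleGraph.mem_neighborFinset ..).mp (hNx ▸ (by simp : q ∈ ({p,q} : Finset _)))
    have hzx' : G.Adj x z := (SimpleGraph.mem_neighborFinset ..).mp hzx
    have hzy' : G.Adj y z := (SimpleGraph.mem_neighborFinset ..).mp hzy
    exact hxy.symm (cherry_L2 hG hp hq hpq hzx' hzy'.symm)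
  have hd12 := hdisjN u1 u2 hu1 hu2 h12
  have hd13 := hdisjN u1 u3 hu1 hu3 h13
  have hd23 := hdisjN u2 u3 hu2 hu3 h23
  have hsubCF : G.neighborFinset u1 ∪ G.neighborFinset u2 ∪ G.neighborFinset u3 ⊆ CF :=
    Finset.union_subset (Finset.union_subset (hfacts u1 hu1).2 (hfacts u2 hu2).2) (hfacts u3 hu3).2
  have hcard6 : (G.neighborFinset u1 ∪ G.neighborFinset u2 ∪ G.neighborFinset u3).card = 6 := by
    rw [Finset.card_union_of_disjoint, Finset.card_union_of_disjoint hd12,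
      (hfacts u1 hu1).1, (hfacts u2 hu2).1, (hfacts u3 hu3).1]
    exact Finset.disjoint_union_left.mpr ⟨hd13, hd23⟩
  have := Finset.card_le_card hsubCF
  omega

private lemma switch_compl {V : Type*} (G : SimpleGraph V) (U : Set V) :
    G.switch Uᶜ = G.switch U := by
  ext i j
  show (i ≠ j ∧ _) ↔ (i ≠ j ∧ _)
  simp only [Set.mem_compl_iff]
  constructor <;> rintro ⟨h1, h2⟩ <;> exact ⟨h1, by tauto⟩

end Aux

/-- if `G` has order `n ≥ 7`, all components of `G` are isolated vertices,
edges, or cherries, and the same holds for the switching `G^U`, then `U` is trivial. -/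
theorem switch_trivial_of_cherryForest {n : ℕ} (hn : 7 ≤ n) (G : SimpleGraph (Fin n))
    (U : Set (Fin n)) (hG : IsCherryForest G) (hGU : IsCherryForest (G.switch U)) :
    U = ∅ ∨ U = Set.univ := by
  by_contra h
  push_neg at h
  obtain ⟨hne, hnu⟩ := h
  have hU : U.Nonempty := hne
  have hUc : Uᶜ.Nonempty := by
    obtain ⟨x, hx⟩ := Set.ne_univ_iff_exists_notMem U |>.mp hnu
    exact ⟨x, hx⟩
  have h1 : (Uᶜ).ncard ≤ 3 := key_lemma hn G U hG hGU hU
  have h2 : (Uᶜᶜ).ncard ≤ 3 :=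
    key_lemma hn G Uᶜ hG (by rw [switch_compl]; exact hGU) hUc
  rw [compl_compl] at h2
  have hsum : U.ncard + (Uᶜ).ncard = n := by
    rw [Set.ncard_add_ncard_compl U (Set.toFinite U) (Set.toFinite Uᶜ), Nat.card_eq_fintype_card,
      Fintype.card_fin]
  omega
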